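/- Let P be a partition of [n+1]. If y ∈ (ℝ^d)^n and there exists x ∈ E(P) with |y − e_P(x)| < ε_P/4, then y ∈ ν_P, π_P(y) ∉ E_P, and for every pair of non-extremal pieces α < β of P one has |π_P(y)_α − π_P(y)_β| > d_{αβ}(P) (so π_P(y) ∉ D_{αβ}). -/

import Mathlib

open scoped BigOperators
open Finset

noncomputable section

namespace SinhaKnots

attribute [local instance] Classical.propDecidable

/-- `ℝ^d` with the Euclidean norm. -/
abbrev Rd (d : ℕ) := EuclideanSpace ℝ (Fin d)

/-- `(ℝ^d)^m` with the Euclidean norm. -/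
abbrev Vec (m d : ℕ) := PiLp 2 (fun _ : Fin m => Rd d)

/-- The first standard basis vector `u = (1,0,…,0)` of `ℝ^d`. -/
def uVec (d : ℕ) : Rd d := if h : 0 < d then EuclideanSpace.single ⟨0, h⟩ 1 else 0

/-- The second standard basis vector `v = (0,1,0,…,0)` of `ℝ^d`. -/
def vVec (d : ℕ) : Rd d := if h : 1 < d then EuclideanSpace.single ⟨1, h⟩ 1 else 0

/-- The first coordinate of a vector of `ℝ^d`. -/
def fst {d : ℕ} (x : Rd d) : ℝ := if h : 0 < d then x ⟨0, h⟩ else 0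

/-- A partition of `[n+1] = {0,1,…,n+1}` into (at least two) nonempty consecutive intervals,
encoded as a monotone surjection onto `Fin (p+2)`; the pieces are the fibers, totally
ordered via the index, and `p` is the number of non-extremal pieces. -/
structure IntervalPartition (n : ℕ) where
  p : ℕ
  toFun : Fin (n + 2) → Fin (p + 2)
  mono : Monotone toFun
  surj : Function.Surjective toFun

/-- `Q` is a subdivision of `P`: every piece of `Q` is contained in a piece of `P`,
and `Q ≠ P` (equivalently, `Q` has strictly more pieces). -/
def Subdivides {n : ℕ} (Q P : IntervalPartition n) : Prop :=
  (∀ i j, Q.toFun i = Q.toFun j → P.toFun i = P.toFun j) ∧ P.p < Q.p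

/-- The element `i+1` of `[n+1]`, corresponding to the `i`-th component of `(ℝ^d)^n`. -/
def elt (n : ℕ) (i : Fin n) : Fin (n + 2) := ⟨(i : ℕ) + 1, by omega⟩

/-- The finest partition of `[n+1]`, into singletons. -/
def finest (n : ℕ) : IntervalPartition n :=
  ⟨n, id, monotone_id, Function.surjective_id⟩

variable {n : ℕ}

/-- The piece of `P` with index `a`, as a finite set of elements of `[n+1]`. -/
def fiber (P : IntervalPartition n) (a : Fin (P.p + 2)) : Finset (Fin (n + 2)) :=
  Finset.univ.filter fun i => P.toFun i = a

lemma fiber_nonempty (P : IntervalPartition n) (a : Fin (P.p + 2)) : (fiber P a).Nonempty := by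
  obtain ⟨i, hi⟩ := P.surj a
  exact ⟨i, by simp [fiber, hi]⟩

/-- The minimal element of a piece. -/
def minElt (P : IntervalPartition n) (a : Fin (P.p + 2)) : Fin (n + 2) :=
  (fiber P a).min' (fiber_nonempty P a)

/-- The maximal element of a piece. -/
def maxElt (P : IntervalPartition n) (a : Fin (P.p + 2)) : Fin (n + 2) :=
  (fiber P a).max' (fiber_nonempty P a)

/-- `c_α = ∑_{i ∈ α} c_i`. -/
def cPiece (c : Fin (n + 2) → ℝ) (P : IntervalPartition n) (a : Fin (P.p + 2)) : ℝ :=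
  ∑ i ∈ fiber P a, c i

/-- `c_{≤α} = ∑_{γ < α} c_γ + c_α/2`. -/
def cLE (c : Fin (n + 2) → ℝ) (P : IntervalPartition n) (a : Fin (P.p + 2)) : ℝ :=
  (∑ i ∈ Finset.univ.filter fun i => P.toFun i < a, c i) + cPiece c P a / 2

/-- `c_{≥α} = ∑_{γ > α} c_γ + c_α/2`. -/
def cGE (c : Fin (n + 2) → ℝ) (P : IntervalPartition n) (a : Fin (P.p + 2)) : ℝ :=
  (∑ i ∈ Finset.univ.filter fun i => a < P.toFun i, c i) + cPiece c P a / 2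

/-- `c_{αβ} = ∑_{α < γ < β} c_γ + (c_α + c_β)/2`. -/
def cBetween (c : Fin (n + 2) → ℝ) (P : IntervalPartition n) (a b : Fin (P.p + 2)) : ℝ :=
  (∑ i ∈ Finset.univ.filter fun i => a < P.toFun i ∧ P.toFun i < b, c i)
    + (cPiece c P a + cPiece c P b) / 2

/-- The tuple `x` indexed by the non-extremal pieces, extended to all pieces by the fixed
values `x₀ = (-1+ρc_{α₀}/2)u` and `x_{p+1} = (1-ρc_{α_{p+1}}/2)u` on the extremal pieces. -/
def extTuple (ρ : ℝ) (c : Fin (n + 2) → ℝ) (P : IntervalPartition n) {d : ℕ}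
    (x : Vec P.p d) : Fin (P.p + 2) → Rd d := fun a =>
  if _h0 : (a : ℕ) = 0 then (-1 + ρ * cPiece c P 0 / 2) • uVec d
  else if _h1 : (a : ℕ) = P.p + 1 then
    (1 - ρ * cPiece c P (Fin.last (P.p + 1)) / 2) • uVec d
  else x ⟨(a : ℕ) - 1, by have := a.isLt; omega⟩

/-- The displacement (along `u`) of the center of the subsegment corresponding to the
`Q`-piece of `i` inside the segment of the `P`-piece of `i`, for a refinement `Q` of `P`. -/
def offsetQ (ρ : ℝ) (c : Fin (n + 2) → ℝ) (P Q : IntervalPartition n) (i : Fin (n + 2)) : ℝ :=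
  ρ * (- cPiece c P (P.toFun i) / 2
    + (∑ j ∈ Finset.univ.filter fun j => P.toFun j = P.toFun i ∧ Q.toFun j < Q.toFun i, c j)
    + cPiece c Q (Q.toFun i) / 2)

/-- The affine injection `e_{P,Q} : (ℝ^d)^p → (ℝ^d)^q` for a refinement `Q` of `P`. -/
def eMap (ρ : ℝ) (c : Fin (n + 2) → ℝ) (P Q : IntervalPartition n) {d : ℕ}
    (x : Vec P.p d) : Vec Q.p d := WithLp.toLp 2 fun b =>
  extTuple ρ c P x (P.toFun (minElt Q (elt Q.p b)))
    + offsetQ ρ c P Q (minElt Q (elt Q.p b)) • uVec d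

/-- The affine injection `e_P : (ℝ^d)^p → (ℝ^d)^n`. -/
def ePt (ρ : ℝ) (c : Fin (n + 2) → ℝ) (P : IntervalPartition n) {d : ℕ}
    (x : Vec P.p d) : Vec n d :=
  eMap ρ c P (finest n) x

/-- `ε_P = ε/8^{n-p}`. -/
def epsP (ε : ℝ) (P : IntervalPartition n) : ℝ := ε / 8 ^ (n - P.p)

/-- The open `ε_P`-neighborhood `ν_P` of `e_P((ℝ^d)^p)` in `(ℝ^d)^n`. -/
def nuP (ρ ε : ℝ) (c : Fin (n + 2) → ℝ) (P : IntervalPartition n) (d : ℕ) : Set (Vec n d) :=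
  {y | ∃ x : Vec P.p d, ‖y - ePt ρ c P x‖ < epsP ε P}

/-- The orthogonal projection `π_P : (ℝ^d)^n → (ℝ^d)^p`, i.e. the unique minimizer of
`x ↦ |y - e_P(x)|`; explicitly, its `α`-component is the average of `y_i - o_i u` over the
elements `i` of the piece `α`, where `o_i` is the offset of `i` in `e_P`. -/
def projP (ρ : ℝ) (c : Fin (n + 2) → ℝ) (P : IntervalPartition n) {d : ℕ}
    (y : Vec n d) : Vec P.p d := WithLp.toLp 2 fun a =>
  ((Finset.univ.filter fun i : Fin n => P.toFun (elt n i) = elt P.p a).card : ℝ)⁻¹ •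
    ∑ i ∈ Finset.univ.filter fun i : Fin n => P.toFun (elt n i) = elt P.p a,
      (y i - offsetQ ρ c P (finest n) (elt n i) • uVec d)

/-- The component of a tuple `x ∈ (ℝ^d)^m` at a non-extremal vertex index `w` (and `0` at
the extremal indices, where there is no component). -/
def comp {m d : ℕ} (x : Vec m d) (w : Fin (m + 2)) : Rd d :=
  if h : 0 < (w : ℕ) ∧ (w : ℕ) < m + 1 then x ⟨(w : ℕ) - 1, by omega⟩ else 0

/-- `d_{αβ}(P) = ρ c_{αβ} - ε_P`. -/
def dBound (ρ ε : ℝ) (c : Fin (n + 2) → ℝ) (P : IntervalPartition n)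
    (a b : Fin (P.p + 2)) : ℝ :=
  ρ * cBetween c P a b - epsP ε P

/-- `D_{αβ} = {x : |x_α - x_β| ≤ d_{αβ}(P)}`. -/
def Dset (ρ ε : ℝ) (c : Fin (n + 2) → ℝ) (P : IntervalPartition n) (d : ℕ)
    (a b : Fin (P.p + 2)) : Set (Vec P.p d) :=
  {x | ‖comp x a - comp x b‖ ≤ dBound ρ ε c P a b}

/-- `E_α`. -/
def Eset (ρ ε : ℝ) (c : Fin (n + 2) → ℝ) (P : IntervalPartition n) (d : ℕ)
    (a : Fin (P.p + 2)) : Set (Vec P.p d) :=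
  {x | 1 - ρ * cPiece c P a / 2 + epsP ε P ≤ ‖comp x a‖
    ∨ fst (comp x a) ≤ -1 + ρ * cLE c P a - epsP ε P
    ∨ 1 - ρ * cGE c P a + epsP ε P ≤ fst (comp x a)}

/-- `E_P = ⋃_α E_α` over the non-extremal pieces `α`. -/
def EsetP (ρ ε : ℝ) (c : Fin (n + 2) → ℝ) (P : IntervalPartition n) (d : ℕ) :
    Set (Vec P.p d) :=
  ⋃ a ∈ {a : Fin (P.p + 2) | 0 < (a : ℕ) ∧ (a : ℕ) < P.p + 1}, Eset ρ ε c P d a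

/-- The configuration space `E(P) ⊂ (ℝ^d)^p`. -/
def Econf (ρ : ℝ) (c : Fin (n + 2) → ℝ) (P : IntervalPartition n) (d : ℕ) :
    Set (Vec P.p d) :=
  {x | (∀ w : Fin (P.p + 2), 0 < (w : ℕ) → (w : ℕ) < P.p + 1 →
          ‖comp x w‖ ≤ 1 - ρ * cPiece c P w / 2 ∧
          -1 + ρ * cLE c P w ≤ fst (comp x w) ∧
          fst (comp x w) ≤ 1 - ρ * cGE c P w) ∧
       ∀ w w' : Fin (P.p + 2), 0 < (w : ℕ) → (w' : ℕ) < P.p + 1 → w < w' →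
          ρ * cBetween c P w w' ≤ ‖comp x w - comp x w'‖}

/-! ### Graphs -/

/-- A graph on a partition with `m` non-extremal pieces: a finite set of edges, each being a
pair of vertices (vertices are the pieces, i.e. elements of `Fin (m+2)`). -/
abbrev GraphOn (m : ℕ) := Finset (Fin (m + 2) × Fin (m + 2))

/-- The edges go between non-extremal vertices and are increasing pairs. -/
def IsGraphOn {m : ℕ} (G : GraphOn m) : Prop :=
  ∀ e ∈ G, 0 < (e.1 : ℕ) ∧ e.1 < e.2 ∧ (e.2 : ℕ) < m + 1

/-- Adjacency relation of a graph. -/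
def adj {m : ℕ} (G : GraphOn m) (a b : Fin (m + 2)) : Prop :=
  ∃ e ∈ G, (e.1 = a ∧ e.2 = b) ∨ (e.1 = b ∧ e.2 = a)

/-- `conn G a b` : `a` and `b` lie in the same connected component of `G`. -/
def conn {m : ℕ} (G : GraphOn m) : Fin (m + 2) → Fin (m + 2) → Prop :=
  Relation.ReflTransGen (adj G)

/-- A vertex is discrete if no edge is incident with it. -/
def IsDiscrete {m : ℕ} (G : GraphOn m) (a : Fin (m + 2)) : Prop :=
  ∀ e ∈ G, e.1 ≠ a ∧ e.2 ≠ a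

lemma adj_symm {m : ℕ} (G : GraphOn m) : Symmetric (adj G) := by
  rintro a b ⟨e, he, h⟩
  exact ⟨e, he, h.symm⟩

/-- Being in the same connected component is an equivalence relation. -/
def connSetoid {m : ℕ} (G : GraphOn m) : Setoid (Fin (m + 2)) where
  r := conn G
  iseqv := by
    refine ⟨fun _ => Relation.ReflTransGen.refl, ?_, fun h h' => h.trans h'⟩
    intro x y h
    induction h with
    | refl => exact Relation.ReflTransGen.refl
    | tail _ hab ih => exact Relation.ReflTransGen.head (adj_symm G hab) ih

/-- The number of connected components of a graph (all `m+2` vertices included). -/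
def ncomp {m : ℕ} (G : GraphOn m) : ℕ := Fintype.card (Quotient (connSetoid G))

/-- `e` is a bridge of `G` if removing it increases the number of connected components. -/
def IsBridge {m : ℕ} (G : GraphOn m) (e : Fin (m + 2) × Fin (m + 2)) : Prop :=
  e ∈ G ∧ ncomp G < ncomp (G.erase e)

/-! ### Condensed maps -/

/-- The convex hull of `{f_j(x) : j ∈ α}`. -/
def hullPoints {d : ℕ} (P : IntervalPartition n) {X : Type*} (f : X → Vec n d) (x : X)
    (a : Fin (P.p + 2)) : Set (Rd d) :=
  convexHull ℝ {q | ∃ j : Fin n, P.toFun (elt n j) = a ∧ q = f x j}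

/-- `a` is a base (of its connected component of `G`) for the map `f`. -/
def IsBase {d : ℕ} (P : IntervalPartition n) (G : GraphOn P.p) {X : Type*}
    (f : X → Vec n d) (a : Fin (P.p + 2)) : Prop :=
  (∀ x : X, ∀ b, conn G a b → ∀ i : Fin n, P.toFun (elt n i) = b →
      f x i ∈ hullPoints P f x a)
  ∧ ∀ e ∈ G, conn G a e.1 → ¬(e.1 < a ∧ e.2 < a)

/-- A map `f : X → (ℝ^d)^n` is `G`-condensed: it is proper and each connected component
of `G` has a base. -/
def IsCondensed {d : ℕ} (P : IntervalPartition n) (G : GraphOn P.p) {X : Type*}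
    [TopologicalSpace X] (f : X → Vec n d) : Prop :=
  IsProperMap f ∧ ∀ a : Fin (P.p + 2), ∃ b, conn G a b ∧ IsBase P G f b

/-- `⋂_{(α,β) ∈ E(G)} D_{αβ}`. -/
def interD (ρ ε : ℝ) (c : Fin (n + 2) → ℝ) (P : IntervalPartition n) (d : ℕ)
    (G : GraphOn P.p) : Set (Vec P.p d) :=
  ⋂ e ∈ G, Dset ρ ε c P d e.1 e.2

/-- `U_G`. -/
def Uset (ρ ε : ℝ) (c : Fin (n + 2) → ℝ) (P : IntervalPartition n) (d : ℕ)
    (G : GraphOn P.p) : Set (Vec n d) :=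
  (nuP ρ ε c P d)ᶜ ∪ (projP ρ c P) ⁻¹' (interD ρ ε c P d G)

/-- Product of the projections to the first coordinate. -/
def p1 {m d : ℕ} (y : Vec m d) : Fin m → ℝ := fun i => fst (y i)

/-- `U_G^1`. -/
def Uset1 (ρ ε : ℝ) (c : Fin (n + 2) → ℝ) (P : IntervalPartition n) (d : ℕ)
    (G : GraphOn P.p) : Set (Vec n d) :=
  (p1 ⁻¹' (p1 '' nuP ρ ε c P d))ᶜ
    ∪ p1 ⁻¹' (p1 '' ((projP ρ c P) ⁻¹' (interD ρ ε c P d G)))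

/-! ### Contractions and homotopies -/

/-- The translation vector `A_e(s)` of the `e`-contraction. -/
def Acontr {d : ℕ} (P : IntervalPartition n) (G : GraphOn P.p)
    (e : Fin (P.p + 2) × Fin (P.p + 2)) (s : ℝ) : Vec n d := WithLp.toLp 2 fun i =>
  if conn (G.erase e) (P.toFun (elt n i)) e.1 then s • vVec d
  else if conn (G.erase e) (P.toFun (elt n i)) e.2 then -(s • vVec d) else 0

/-- The `e`-contraction `F(x,s) = f(x) + A_e(s)` of `f` for `G`. -/
def econtr {d : ℕ} (P : IntervalPartition n) (G : GraphOn P.p)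
    (e : Fin (P.p + 2) × Fin (P.p + 2)) {X : Type*} (f : X → Vec n d) :
    X × ↥(Set.Ici (0 : ℝ)) → Vec n d :=
  fun q => f q.1 + Acontr P G e (q.2 : ℝ)

/-- The `(e,e')`-contraction `F(x,s₁,s₂) = f(x) + A_e(s₁) + A_{e'}(s₂)` of `f` for `G`. -/
def eecontr {d : ℕ} (P : IntervalPartition n) (G : GraphOn P.p)
    (e e' : Fin (P.p + 2) × Fin (P.p + 2)) {X : Type*} (f : X → Vec n d) :
    X × ↥(Set.Ici (0 : ℝ)) × ↥(Set.Ici (0 : ℝ)) → Vec n d :=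
  fun q => f q.1 + Acontr P G e (q.2.1 : ℝ) + Acontr P G e' (q.2.2 : ℝ)

/-- The `(i,σ)`-contraction of a map `F` (σ = ±1): add `σsu` to the `i`-th component and
`-σsu` to the `(i+1)`-th component. Components are numbered `1,…,m` (the `k`-th coordinate
of `Vec m d` is component number `k+1`). -/
def icontr {m d : ℕ} {Y : Type*} (F : Y → Vec m d) (i : ℕ) (σ : ℝ) :
    Y × ↥(Set.Ici (0 : ℝ)) → Vec m d :=
  fun q => WithLp.toLp 2 fun k => F q.1 k +
    (if (k : ℕ) + 1 = i then σ * (q.2 : ℝ)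
     else if (k : ℕ) + 1 = i + 1 then -(σ * (q.2 : ℝ)) else 0) • uVec d

/-- The straight homotopy from `f` to `g`. -/
def straightH {V : Type*} [AddCommGroup V] [Module ℝ V] {Y : Type*} (f g : Y → V) :
    Y × ↥(Set.Icc (0 : ℝ) 1) → V :=
  fun q => (1 - (q.2 : ℝ)) • f q.1 + (q.2 : ℝ) • g q.1

/-! ### Merging pieces (the face operations δ) -/

/-- Value of the vertex map merging the pieces (0-based) `k` and `k+1`. -/
def vmapVal (m k : ℕ) (a : ℕ) : ℕ :=
  if m = 0 then a else min (if a ≤ k then a else a - 1) m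

/-- The vertex map of the merge, `Fin (m+2) → Fin (m-1+2)`. -/
def vmapFin (m k : ℕ) (a : Fin (m + 2)) : Fin (m - 1 + 2) :=
  ⟨vmapVal m k (a : ℕ), by have := a.isLt; unfold vmapVal; split <;> omega⟩

/-- The partition `δ_kP` obtained from `P` by uniting its `(k+1)`-th and `(k+2)`-th pieces
(i.e. the pieces of 0-based indices `k` and `k+1`). -/
def deltaPart (P : IntervalPartition n) (k : ℕ) : IntervalPartition n where
  p := P.p - 1
  toFun := fun i => vmapFin P.p k (P.toFun i)
  mono := by
    intro a b hab
    have h2 : (P.toFun a : ℕ) ≤ (P.toFun b : ℕ) := P.mono hab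
    simp only [vmapFin, Fin.mk_le_mk, vmapVal]
    split_ifs <;> omega
  surj := by
    intro b
    have hb := b.isLt
    by_cases h0 : P.p = 0
    · obtain ⟨i, hi⟩ := P.surj ⟨(b : ℕ), by omega⟩
      refine ⟨i, Fin.ext ?_⟩
      simp only [vmapFin, vmapVal, hi, h0, if_true]
    · rcases le_or_gt (b : ℕ) k with hbk | hbk
      · obtain ⟨i, hi⟩ := P.surj ⟨(b : ℕ), by omega⟩
        refine ⟨i, Fin.ext ?_⟩
        simp only [vmapFin, vmapVal, hi, h0, if_false]
        split_ifs <;> omega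
      · obtain ⟨i, hi⟩ := P.surj ⟨(b : ℕ) + 1, by omega⟩
        refine ⟨i, Fin.ext ?_⟩
        simp only [vmapFin, vmapVal, hi, h0, if_false]
        split_ifs <;> omega

/-- For a refinement pair (`Q` refines `P`): the piece of `P` containing a given piece of
`Q`. -/
def pieceMap (Q P : IntervalPartition n) : Fin (Q.p + 2) → Fin (P.p + 2) :=
  fun b => P.toFun (minElt Q b)

/-- The image graph on a coarser partition (e.g. `δ_iG` on `δ_iQ`). -/
def pushGraph (Q P : IntervalPartition n) (G : GraphOn Q.p) : GraphOn P.p :=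
  G.image fun e => (pieceMap Q P e.1, pieceMap Q P e.2)

/-- The image graph is an honest graph: no loops nor double edges are created
(injectivity of the edge map) and no edge is incident with an extremal piece. -/
def GoodPush (Q P : IntervalPartition n) (G : GraphOn Q.p) : Prop :=
  Set.InjOn (fun e : Fin (Q.p + 2) × Fin (Q.p + 2) => (pieceMap Q P e.1, pieceMap Q P e.2)) ↑G
  ∧ IsGraphOn (pushGraph Q P G)


/-! ### Auxiliary lemmas for statement 5 -/

lemma norm_comp_le_vec {m d : ℕ} (z : Vec m d) (i : Fin m) : ‖z i‖ ≤ ‖z‖ := by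
  have h := PiLp.norm_sq_eq_of_L2 (fun _ : Fin m => Rd d) z
  have h1 : ‖z i‖ ^ 2 ≤ ‖z‖ ^ 2 := by
    rw [h]
    exact Finset.single_le_sum (f := fun j => ‖z j‖ ^ 2) (fun j _ => sq_nonneg _)
      (Finset.mem_univ i)
  nlinarith [norm_nonneg z, norm_nonneg (z i)]

lemma abs_fst_le {d : ℕ} (v : Rd d) : |fst v| ≤ ‖v‖ := by
  unfold fst
  split
  · rename_i h
    have h2 := PiLp.norm_sq_eq_of_L2 (fun _ : Fin d => ℝ) v
    have h1 : ‖v ⟨0, h⟩‖ ^ 2 ≤ ‖v‖ ^ 2 := by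
      rw [h2]
      exact Finset.single_le_sum (f := fun j => ‖v j‖ ^ 2) (fun j _ => sq_nonneg _)
        (Finset.mem_univ (⟨0, h⟩ : Fin d))
    have := Real.norm_eq_abs (v ⟨0, h⟩)
    nlinarith [norm_nonneg v, norm_nonneg (v ⟨0, h⟩)]
  · simpa using norm_nonneg v

lemma fst_sub {d : ℕ} (u v : Rd d) : fst (u - v) = fst u - fst v := by
  unfold fst
  split <;> simp

lemma toFun_zero (P : IntervalPartition n) : P.toFun 0 = 0 := by
  obtain ⟨j, hj⟩ := P.surj 0
  have h := P.mono (Fin.zero_le j)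
  rw [hj] at h
  exact le_antisymm h (Fin.zero_le _)

lemma toFun_last (P : IntervalPartition n) :
    P.toFun (Fin.last (n + 1)) = Fin.last (P.p + 1) := by
  obtain ⟨j, hj⟩ := P.surj (Fin.last (P.p + 1))
  have h := P.mono (Fin.le_last j)
  rw [hj] at h
  exact le_antisymm (Fin.le_last _) h

lemma minElt_finest (w : Fin (n + 2)) : minElt (finest n) w = w := by
  have hf : fiber (finest n) w = {w} := by
    ext i
    unfold fiber
    exact (@Finset.mem_filter _ (fun a => (finest n).toFun a = w)
      (fun a => instDecidableEqFin _ ((finest n).toFun a) w) Finset.univ i).trans ⟨fun h => Finset.mem_singleton.mpr h.2,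
      fun h => ⟨Finset.mem_univ _, Finset.mem_singleton.mp h⟩⟩
  unfold minElt
  simp [hf]

lemma extTuple_elt (ρ : ℝ) (c : Fin (n + 2) → ℝ) (P : IntervalPartition n) {d : ℕ}
    (x : Vec P.p d) (a : Fin P.p) : extTuple ρ c P x (elt P.p a) = x a := by
  have ha := a.isLt
  have h0 : ((elt P.p a : Fin (P.p + 2)) : ℕ) ≠ 0 := by simp [elt]
  have h1 : ((elt P.p a : Fin (P.p + 2)) : ℕ) ≠ P.p + 1 := by
    simp only [elt]
    omega
  rw [extTuple, dif_neg h0, dif_neg h1]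
  exact congrArg (fun j : Fin P.p => x j) (Fin.ext (by simp [elt]))

lemma ePt_apply (ρ : ℝ) (c : Fin (n + 2) → ℝ) (P : IntervalPartition n) {d : ℕ}
    (x : Vec P.p d) (i : Fin n) :
    ePt ρ c P x i = extTuple ρ c P x (P.toFun (elt n i))
      + offsetQ ρ c P (finest n) (elt n i) • uVec d := by
  have h : minElt (finest n) (elt (finest n).p i) = elt n i := minElt_finest _
  simp only [ePt, eMap, WithLp.ofLp_toLp]
  rw [h]

lemma fiberFin_nonempty (P : IntervalPartition n) (a : Fin P.p) :
    (Finset.univ.filter fun i : Fin n => P.toFun (elt n i) = elt P.p a).Nonempty := by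
  obtain ⟨j, hj⟩ := P.surj (elt P.p a)
  have ha := a.isLt
  have hj0 : (j : ℕ) ≠ 0 := by
    intro h
    have : j = 0 := Fin.ext h
    rw [this, toFun_zero] at hj
    have := congrArg (fun z : Fin (P.p + 2) => (z : ℕ)) hj
    simp [elt] at this
  have hjn : (j : ℕ) ≠ n + 1 := by
    intro h
    have : j = Fin.last (n + 1) := Fin.ext h
    rw [this, toFun_last] at hj
    have := congrArg (fun z : Fin (P.p + 2) => (z : ℕ)) hj
    simp [elt, Fin.last] at this
    omega
  have hjlt := j.isLt
  refine ⟨⟨(j : ℕ) - 1, by omega⟩, ?_⟩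
  simp only [Finset.mem_filter, Finset.mem_univ, true_and]
  have : elt n ⟨(j : ℕ) - 1, by omega⟩ = j := Fin.ext (by simp [elt]; omega)
  rw [this, hj]

lemma projP_sub_le (ρ : ℝ) (c : Fin (n + 2) → ℝ) (P : IntervalPartition n) {d : ℕ}
    (y : Vec n d) (x : Vec P.p d) (a : Fin P.p) :
    ‖projP ρ c P y a - x a‖ ≤ ‖y - ePt ρ c P x‖ := by
  classical
  set S := Finset.univ.filter fun i : Fin n => P.toFun (elt n i) = elt P.p a with hS
  have hSne : S.Nonempty := fiberFin_nonempty P a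
  have hcard : (0 : ℝ) < (S.card : ℝ) := by
    exact_mod_cast Finset.card_pos.mpr hSne
  have hxa : x a = ((S.card : ℝ))⁻¹ • ∑ _i ∈ S, x a := by
    rw [Finset.sum_const, ← Nat.cast_smul_eq_nsmul ℝ, smul_smul,
      inv_mul_cancel₀ (ne_of_gt hcard), one_smul]
  have hdiff : projP ρ c P y a - x a
      = ((S.card : ℝ))⁻¹ • ∑ i ∈ S, (y i - ePt ρ c P x i) := by
    simp only [projP, WithLp.ofLp_toLp]
    rw [hxa, ← smul_sub, ← Finset.sum_sub_distrib]
    congr 1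
    apply Finset.sum_congr rfl
    intro i hi
    have hi' : P.toFun (elt n i) = elt P.p a := by
      simpa [hS] using hi
    rw [ePt_apply, hi', extTuple_elt]
    abel
  rw [hdiff]
  rw [norm_smul]
  have hbound : ‖∑ i ∈ S, (y i - ePt ρ c P x i)‖ ≤ (S.card : ℝ) * ‖y - ePt ρ c P x‖ := by
    calc ‖∑ i ∈ S, (y i - ePt ρ c P x i)‖ ≤ ∑ i ∈ S, ‖y i - ePt ρ c P x i‖ :=
          norm_sum_le _ _
      _ ≤ ∑ _i ∈ S, ‖y - ePt ρ c P x‖ := by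
          apply Finset.sum_le_sum
          intro i _
          exact norm_comp_le_vec (y - ePt ρ c P x) i
      _ = (S.card : ℝ) * ‖y - ePt ρ c P x‖ := by
          rw [Finset.sum_const, nsmul_eq_mul]
  have h1 : ‖((S.card : ℝ))⁻¹‖ = ((S.card : ℝ))⁻¹ := by
    rw [Real.norm_eq_abs, abs_of_pos (inv_pos.mpr hcard)]
  rw [h1]
  calc ((S.card : ℝ))⁻¹ * ‖∑ i ∈ S, (y i - ePt ρ c P x i)‖
      ≤ ((S.card : ℝ))⁻¹ * ((S.card : ℝ) * ‖y - ePt ρ c P x‖) := by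
        apply mul_le_mul_of_nonneg_left hbound (le_of_lt (inv_pos.mpr hcard))
    _ = ‖y - ePt ρ c P x‖ := by
        rw [← mul_assoc, inv_mul_cancel₀ (ne_of_gt hcard), one_mul]

lemma comp_eq_apply {m d : ℕ} (z : Vec m d) (w : Fin (m + 2)) (h0 : 0 < (w : ℕ))
    (h1 : (w : ℕ) < m + 1) : comp z w = z ⟨(w : ℕ) - 1, by omega⟩ :=
  dif_pos ⟨h0, h1⟩

/-- if `y` is within `ε_P/4` of `e_P(x)` for some `x ∈ E(P)`, then `y ∈ ν_P`,
`π_P(y) ∉ E_P`, and `|π_P(y)_α - π_P(y)_β| > d_{αβ}(P)` for every pair of non-extremal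
pieces `α < β` (so `π_P(y) ∉ D_{αβ}`). -/
theorem statement_5
    (n d : ℕ) (hn : 1 ≤ n) (hd : 1 ≤ d) (ρ ε : ℝ) (c : Fin (n + 2) → ℝ)
    (hρ0 : 0 < ρ) (hρ1 : ρ < 1) (hε0 : 0 < ε) (hc : ∀ i, 0 < c i)
    (hsum : ∑ i, c i = 1) (hc0 : 100 * ε / ρ < c 0)
    (hci : ∀ i : Fin (n + 2), 1 ≤ (i : ℕ) →
      100 * (ε / ρ + ∑ j ∈ Finset.univ.filter (fun j : Fin (n + 2) => (j : ℕ) < (i : ℕ)), c j)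
        < c i)
    (P : IntervalPartition n) (y : Vec n d) (x : Vec P.p d)
    (hx : x ∈ Econf ρ c P d) (hclose : ‖y - ePt ρ c P x‖ < epsP ε P / 4) :
    y ∈ nuP ρ ε c P d ∧
    projP ρ c P y ∉ EsetP ρ ε c P d ∧
    ∀ a b : Fin (P.p + 2), 0 < (a : ℕ) → a < b → (b : ℕ) < P.p + 1 →
      dBound ρ ε c P a b < ‖comp (projP ρ c P y) a - comp (projP ρ c P y) b‖ ∧
      projP ρ c P y ∉ Dset ρ ε c P d a b := by
  have hεP : 0 < epsP ε P := by
    unfold epsP; positivity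
  set δ := ‖y - ePt ρ c P x‖ with hδdef
  have hδ0 : 0 ≤ δ := norm_nonneg _
  have hkey : ∀ a : Fin P.p, ‖projP ρ c P y a - x a‖ ≤ δ :=
    fun a => projP_sub_le ρ c P y x a
  refine ⟨⟨x, lt_of_lt_of_le hclose (by linarith)⟩, ?_, ?_⟩
  · -- projP y ∉ EsetP
    intro hmem
    simp only [EsetP, Set.mem_iUnion, Set.mem_setOf_eq] at hmem
    obtain ⟨w, ⟨hw0, hw1⟩, hw⟩ := hmem
    set a' : Fin P.p := ⟨(w : ℕ) - 1, by omega⟩ with ha'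
    have hcompP : comp (projP ρ c P y) w = projP ρ c P y a' := comp_eq_apply _ w hw0 hw1
    have hcompx : comp x w = x a' := comp_eq_apply _ w hw0 hw1
    have hxw := hx.1 w hw0 hw1
    rw [hcompx] at hxw
    obtain ⟨hxn, hxl, hxr⟩ := hxw
    have hk := hkey a'
    have hfst : |fst (projP ρ c P y a') - fst (x a')| ≤ δ := by
      rw [← fst_sub]
      exact le_trans (abs_fst_le _) hk
    have hnrm : ‖projP ρ c P y a'‖ ≤ ‖x a'‖ + δ := by
      have h := norm_sub_norm_le (projP ρ c P y a') (x a')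
      linarith
    simp only [Eset, Set.mem_setOf_eq] at hw
    rw [hcompP] at hw
    have habs := abs_le.mp hfst
    rcases hw with h | h | h
    · linarith
    · linarith
    · linarith
  · -- the distance bounds
    intro a b ha0 hab hb1
    have hab' : (a : ℕ) < (b : ℕ) := hab
    have ha1 : (a : ℕ) < P.p + 1 := by omega
    have hb0 : 0 < (b : ℕ) := by omega
    set a' : Fin P.p := ⟨(a : ℕ) - 1, by omega⟩ with ha'
    set b' : Fin P.p := ⟨(b : ℕ) - 1, by omega⟩ with hb'
    have hcPa : comp (projP ρ c P y) a = projP ρ c P y a' := comp_eq_apply _ a ha0 ha1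
    have hcPb : comp (projP ρ c P y) b = projP ρ c P y b' := comp_eq_apply _ b hb0 hb1
    have hcxa : comp x a = x a' := comp_eq_apply _ a ha0 ha1
    have hcxb : comp x b = x b' := comp_eq_apply _ b hb0 hb1
    have hxab := hx.2 a b ha0 hb1 hab
    rw [hcxa, hcxb] at hxab
    have htri : ‖x a' - x b'‖ ≤ ‖x a' - projP ρ c P y a'‖
        + ‖projP ρ c P y a' - projP ρ c P y b'‖ + ‖projP ρ c P y b' - x b'‖ := by
      have := dist_triangle4 (x a') (projP ρ c P y a') (projP ρ c P y b') (x b')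
      simpa [dist_eq_norm] using this
    have h1 : ‖x a' - projP ρ c P y a'‖ ≤ δ := by
      rw [norm_sub_rev]; exact hkey a'
    have h2 : ‖projP ρ c P y b' - x b'‖ ≤ δ := hkey b'
    have hmain : dBound ρ ε c P a b
        < ‖comp (projP ρ c P y) a - comp (projP ρ c P y) b‖ := by
      rw [hcPa, hcPb]
      unfold dBound
      have : ρ * cBetween c P a b - 2 * δ ≤ ‖projP ρ c P y a' - projP ρ c P y b'‖ := by
        linarith
      linarith
    exact ⟨hmain, fun hmem => absurd hmain (not_lt.mpr hmem)⟩

end SinhaKnots
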